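/- arXiv:solv-int/9710011 — 5 statements merged into one kernel-verified Lean document; each statement's English description precedes it below -/
import Mathlib

section
/- Let A, B be n×n matrices and G a generalized inverse of A with projections P₁ = GA, P₂ = AG. If there exists a matrix X with Aᵀ X - Xᵀ A = B, then Bᵀ = -B and (1 - P₁ᵀ) B (1 - P₁) = 0. -/
/-!
`Aᵀ X - Xᵀ A` is skew-symmetric since transposition swaps its two terms. Since `A G A = A`,
`A` annihilates `1 - G A`, so compressing `Aᵀ X - Xᵀ A` by `1 - G A` kills both terms.
-/

theorem mul_one_sub_mul_eq_zero_of_mul_mul_self_eq {R : Type*} [Ring R] {a g : R}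
    (h : a * g * a = a) : a * (1 - g * a) = 0 := by
  rw [mul_sub, mul_one, ← mul_assoc, h, sub_self]

namespace Matrix

theorem transpose_mul_sub_transpose_mul_transpose {m n R : Type*} [Fintype m] [CommRing R]
    (A X : Matrix m n R) :
    (Aᵀ * X - Xᵀ * A)ᵀ = -(Aᵀ * X - Xᵀ * A) := by
  rw [transpose_sub, transpose_mul, transpose_mul, transpose_transpose, transpose_transpose,
    neg_sub]

theorem transpose_mul_transpose_mul_sub_transpose_mul_mul_eq_zero {m n k R : Type*}
    [Fintype m] [Fintype n] [CommRing R] {A X : Matrix m n R}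
    {Q : Matrix n k R} (hAQ : A * Q = 0) : Qᵀ * (Aᵀ * X - Xᵀ * A) * Q = 0 := by
  have hQA : Qᵀ * Aᵀ = 0 := by rw [← transpose_mul, hAQ, transpose_zero]
  simp only [Matrix.mul_sub, Matrix.sub_mul, ← Matrix.mul_assoc, hQA]
  rw [Matrix.mul_assoc (Qᵀ * Xᵀ) A Q, hAQ, Matrix.zero_mul, Matrix.zero_mul, Matrix.mul_zero,
    sub_self]

end Matrix

theorem matrixeqn_necessary_conditions_general {n : ℕ} {F : Type*} [Field F]
    (A B X G : Matrix (Fin n) (Fin n) F)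
    (h1 : A * G * A = A)
    (hX : A.transpose * X - X.transpose * A = B) :
    B.transpose = -B ∧
      (1 - (G * A).transpose) * B * (1 - G * A) = 0 := by
  subst hX
  refine ⟨Matrix.transpose_mul_sub_transpose_mul_transpose A X, ?_⟩
  have hcompress := Matrix.transpose_mul_transpose_mul_sub_transpose_mul_mul_eq_zero (X := X)
    (mul_one_sub_mul_eq_zero_of_mul_mul_self_eq h1)
  rwa [Matrix.transpose_sub, Matrix.transpose_one] at hcompress

/-- Necessity of conditions (C1) and (C2): if `Aᵀ X - Xᵀ A = B` has a solution `X`,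
then `Bᵀ = -B` and `(1 - P₁ᵀ) B (1 - P₁) = 0`, where `P₁ = G*A` for a generalized
inverse `G` of `A`. -/
theorem matrixeqn_necessary_conditions {n : ℕ} {F : Type*} [Field F]
    (hchar : (2 : F) ≠ 0)
    (A B X G : Matrix (Fin n) (Fin n) F)
    (h1 : A * G * A = A) (h2 : G * A * G = G)
    (hX : A.transpose * X - X.transpose * A = B) :
    B.transpose = -B ∧
      (1 - (G * A).transpose) * B * (1 - G * A) = 0 :=
  matrixeqn_necessary_conditions_general A B X G h1 hX
end

section
/- Let A, B be n×n matrices with Bᵀ = -B, let G be a generalized inverse of A with P₁ = GA, P₂ = AG, and suppose (1 - P₁ᵀ) B (1 - P₁) = 0. Then X = (1/2) Gᵀ B P₁ + Gᵀ B (1 - P₁) satisfies Aᵀ X - Xᵀ A = B. -/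
/-!
Writing `X = Gᵀ Y` turns `Aᵀ X - Xᵀ A` into `Pᵀ Y - Yᵀ P` with `P = G A`, so only the product
`G A` matters. For `Y = ½ B P + B (1 - P)` and skew `B`, the two halves of `Pᵀ B P` add up, and
`Pᵀ Y - Yᵀ P` is the sum of the three corners `Pᵀ B P`, `Pᵀ B (1 - P)`, `(1 - Pᵀ) B P` of `B`,
i.e. `B` minus its fourth corner `(1 - Pᵀ) B (1 - P)`, which vanishes by hypothesis.
-/

open Matrix

section SkewProduct

variable {m n R : Type*} [Fintype m] [Fintype n] [CommRing R]

def skewProduct (A X : Matrix m n R) : Matrix n n R := Aᵀ * X - Xᵀ * A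

theorem skewProduct_transpose_mul (A : Matrix m n R) (G : Matrix n m R) (Y : Matrix n n R) :
    skewProduct A (Gᵀ * Y) = skewProduct (G * A) Y := by
  simp only [skewProduct, transpose_mul, transpose_transpose, Matrix.mul_assoc]

theorem skewProduct_half_mul_add_mul_one_sub [DecidableEq n] [Invertible (2 : R)]
    {B : Matrix n n R} (hB : Bᵀ = -B) (P : Matrix n n R) :
    skewProduct P (⅟(2 : R) • (B * P) + B * (1 - P)) = B - (1 - Pᵀ) * B * (1 - P) := by
  have three_corners :
      B - (1 - Pᵀ) * B * (1 - P) = Pᵀ * B * P + Pᵀ * B * (1 - P) + (1 - Pᵀ) * B * P := by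
    noncomm_ring
  rw [three_corners]
  unfold skewProduct
  simp only [transpose_add, transpose_smul, transpose_mul, transpose_sub, hB,
    Matrix.mul_add, Matrix.add_mul, Matrix.mul_sub, Matrix.sub_mul, Matrix.mul_smul,
    Matrix.smul_mul, Matrix.mul_neg, Matrix.neg_mul, Matrix.mul_one, Matrix.one_mul,
    Matrix.mul_assoc]
  linear_combination (norm := module) (invOf_mul_self (2 : R)) • (Pᵀ * (B * P))

end SkewProduct

theorem matrixeqn_particular_solution_general {n : ℕ} {F : Type*} [Field F]
    (hchar : (2 : F) ≠ 0)
    (A B G : Matrix (Fin n) (Fin n) F)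
    (hB : B.transpose = -B)
    (hC2 : (1 - (G * A).transpose) * B * (1 - G * A) = 0) :
    A.transpose * ((1 / 2 : F) • (G.transpose * B * (G * A)) +
        G.transpose * B * (1 - G * A)) -
      ((1 / 2 : F) • (G.transpose * B * (G * A)) +
        G.transpose * B * (1 - G * A)).transpose * A = B := by
  let _ : Invertible (2 : F) := invertibleOfNonzero hchar
  have hX : (1 / 2 : F) • (G.transpose * B * (G * A)) + G.transpose * B * (1 - G * A)
      = G.transpose * (⅟(2 : F) • (B * (G * A)) + B * (1 - G * A)) := by
    rw [one_div, ← invOf_eq_inv, Matrix.mul_add, Matrix.mul_smul, Matrix.mul_assoc,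
      Matrix.mul_assoc]
  change skewProduct A _ = B
  rw [hX, skewProduct_transpose_mul, skewProduct_half_mul_add_mul_one_sub hB, hC2, sub_zero]

/-- Sufficiency: if `Bᵀ = -B` and `(1 - P₁ᵀ) B (1 - P₁) = 0` with `P₁ = G*A`,
`P₂ = A*G` for a generalized inverse `G` of `A`, then
`X = (1/2) Gᵀ B P₁ + Gᵀ B (1 - P₁)` solves `Aᵀ X - Xᵀ A = B`. -/
theorem matrixeqn_particular_solution {n : ℕ} {F : Type*} [Field F]
    (hchar : (2 : F) ≠ 0)
    (A B G : Matrix (Fin n) (Fin n) F)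
    (h1 : A * G * A = A) (h2 : G * A * G = G)
    (hB : B.transpose = -B)
    (hC2 : (1 - (G * A).transpose) * B * (1 - G * A) = 0) :
    A.transpose * ((1 / 2 : F) • (G.transpose * B * (G * A)) +
        G.transpose * B * (1 - G * A)) -
      ((1 / 2 : F) • (G.transpose * B * (G * A)) +
        G.transpose * B * (1 - G * A)).transpose * A = B :=
  matrixeqn_particular_solution_general hchar A B G hB hC2
end

section
/- Let A, B be n×n matrices with Bᵀ = -B, G a generalized inverse of A, P₁ = GA, P₂ = AG, and (1 - P₁ᵀ)B(1 - P₁) = 0. Then for any matrix Y and any matrix Z such that P₂ᵀ Z P₂ is symmetric, X = (1/2) Gᵀ B P₁ + Gᵀ B (1 - P₁) + (1 - P₂ᵀ) Y + (P₂ᵀ Z P₂) A satisfies Aᵀ X - Xᵀ A = B. -/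
/-- General solution: with `Bᵀ = -B`, `G` a generalized inverse of `A`,
`P₁ = G*A`, `P₂ = A*G` and `(1 - P₁ᵀ)B(1 - P₁) = 0`, for any `Y` and any `Z`
with `P₂ᵀ Z P₂` symmetric,
`X = (1/2) Gᵀ B P₁ + Gᵀ B (1 - P₁) + (1 - P₂ᵀ) Y + (P₂ᵀ Z P₂) A`
solves `Aᵀ X - Xᵀ A = B`. -/
theorem matrixeqn_general_solution {n : ℕ} {F : Type*} [Field F]
    (hchar : (2 : F) ≠ 0)
    (A B G Y Z : Matrix (Fin n) (Fin n) F)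
    (h1 : A * G * A = A) (h2 : G * A * G = G)
    (hB : B.transpose = -B)
    (hC2 : (1 - (G * A).transpose) * B * (1 - G * A) = 0)
    (hZ : ((A * G).transpose * Z * (A * G)).transpose
        = (A * G).transpose * Z * (A * G)) :
    A.transpose * ((1 / 2 : F) • (G.transpose * B * (G * A)) +
        G.transpose * B * (1 - G * A) + (1 - (A * G).transpose) * Y +
        ((A * G).transpose * Z * (A * G)) * A) -
      ((1 / 2 : F) • (G.transpose * B * (G * A)) +
        G.transpose * B * (1 - G * A) + (1 - (A * G).transpose) * Y +
        ((A * G).transpose * Z * (A * G)) * A).transpose * A = B := by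
  have f_add : ∀ M N : Matrix (Fin n) (Fin n) F,
      A.transpose * (M + N) - (M + N).transpose * A
        = (A.transpose * M - M.transpose * A) + (A.transpose * N - N.transpose * A) := by
    intro M N
    rw [Matrix.mul_add, Matrix.transpose_add, Matrix.add_mul]
    abel
  rw [f_add, f_add, f_add]
  have z1 : A.transpose * (1 - (A * G).transpose) = 0 := by
    rw [Matrix.mul_sub, Matrix.mul_one, ← Matrix.transpose_mul, h1, sub_self]
  have z2 : (1 - A * G) * A = 0 := by
    rw [Matrix.sub_mul, Matrix.one_mul, h1, sub_self]
  have g3 : A.transpose * ((1 - (A * G).transpose) * Y)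
      - ((1 - (A * G).transpose) * Y).transpose * A = 0 := by
    rw [← Matrix.mul_assoc, z1, Matrix.zero_mul, Matrix.transpose_mul,
      Matrix.transpose_sub, Matrix.transpose_one, Matrix.transpose_transpose,
      Matrix.mul_assoc, z2, Matrix.mul_zero, sub_zero]
  have g4 : A.transpose * ((A * G).transpose * Z * (A * G) * A)
      - ((A * G).transpose * Z * (A * G) * A).transpose * A = 0 := by
    rw [Matrix.transpose_mul ((A * G).transpose * Z * (A * G)) A, hZ,
      ← Matrix.mul_assoc, sub_self]
  have e1 : A.transpose * (G.transpose * B * (G * A))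
      = (G * A).transpose * B * (G * A) := by
    simp only [Matrix.transpose_mul, Matrix.mul_assoc]
  have e2 : (G.transpose * B * (G * A)).transpose * A
      = -((G * A).transpose * B * (G * A)) := by
    simp only [Matrix.transpose_mul, Matrix.transpose_transpose, hB,
      Matrix.neg_mul, Matrix.mul_neg, Matrix.mul_assoc]
  have g1 : A.transpose * ((1 / 2 : F) • (G.transpose * B * (G * A)))
      - ((1 / 2 : F) • (G.transpose * B * (G * A))).transpose * A
      = (G * A).transpose * B * (G * A) := by
    rw [Matrix.mul_smul, Matrix.transpose_smul, Matrix.smul_mul, e1, e2,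
      smul_neg, sub_neg_eq_add, ← add_smul, ← add_div,
      one_add_one_eq_two, div_self hchar, one_smul]
  have g2 : A.transpose * (G.transpose * B * (1 - G * A))
      - (G.transpose * B * (1 - G * A)).transpose * A
      = (G * A).transpose * B * (1 - G * A) + (1 - (G * A).transpose) * B * (G * A) := by
    simp only [Matrix.transpose_mul, Matrix.transpose_sub, Matrix.transpose_one,
      Matrix.transpose_transpose, hB, Matrix.neg_mul, Matrix.mul_neg,
      Matrix.mul_sub, Matrix.sub_mul, Matrix.mul_one, Matrix.one_mul,
      Matrix.mul_assoc]
    abel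
  rw [g1, g2, g3, g4, add_zero, add_zero]
  have h := hC2
  simp only [Matrix.sub_mul, Matrix.mul_sub, Matrix.one_mul, Matrix.mul_one] at h ⊢
  linear_combination (norm := abel) -h
end

section
/- If X₀ and X are two solutions of Aᵀ X - Xᵀ A = B, then X - X₀ can be written as (1 - P₂ᵀ) Y + S A for some matrix Y and some matrix S with Sᵀ = S and S = P₂ᵀ S P₂, where P₂ = AG for a generalized inverse G of A. -/
/-!
The difference `D = X - X₀` solves the homogeneous equation, i.e. `Aᵀ D` is symmetric.
Take `Y = D` and `S = Gᵀ (Aᵀ D) G`. Symmetry of `Aᵀ D` and `A G A = A` give `S A = P₂ᵀ D`,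
so `D = (1 - P₂ᵀ) D + S A`; `S` is symmetric as a congruence of a symmetric matrix, and
`G A G = G` gives `P₂ᵀ S P₂ = (G A G)ᵀ (Aᵀ D) (G A G) = S`.
-/

namespace Matrix

variable {m n R : Type*} [Fintype n]

theorem IsSymm.transpose_mul_mul [CommSemiring R] {M : Matrix n n R} (hM : M.IsSymm)
    (B : Matrix n m R) : (Bᵀ * M * B).IsSymm := by
  rw [IsSymm, transpose_mul, transpose_mul, transpose_transpose, hM.eq, Matrix.mul_assoc]

variable [CommRing R]

theorem isSymm_transpose_mul_sub {A X X₀ : Matrix n n R}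
    (h : Aᵀ * X - Xᵀ * A = Aᵀ * X₀ - X₀ᵀ * A) : (Aᵀ * (X - X₀)).IsSymm := by
  rw [IsSymm, transpose_mul, transpose_transpose, transpose_sub, mul_sub, sub_mul]
  exact (sub_eq_sub_iff_sub_eq_sub.mp h).symm

theorem transpose_mul_mul_mul_eq_of_isSymm {A D G : Matrix n n R} (hAGA : A * G * A = A)
    (hD : (Aᵀ * D).IsSymm) : Gᵀ * (Aᵀ * D) * G * A = (A * G)ᵀ * D := by
  have hDA : Dᵀ * A = Aᵀ * D := by
    rw [← transpose_transpose A, ← transpose_mul, transpose_transpose, hD.eq]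
  calc Gᵀ * (Aᵀ * D) * G * A = Gᵀ * Dᵀ * (A * G * A) := by
        rw [← hDA]; simp only [Matrix.mul_assoc]
    _ = (A * G)ᵀ * D := by rw [hAGA, Matrix.mul_assoc, hDA, transpose_mul, Matrix.mul_assoc]

theorem transpose_mul_mul_mul_eq_of_mul_mul_eq {A G : Matrix n n R} (hGAG : G * A * G = G)
    (M : Matrix n n R) : (A * G)ᵀ * (Gᵀ * M * G) * (A * G) = Gᵀ * M * G := by
  calc (A * G)ᵀ * (Gᵀ * M * G) * (A * G) = (G * A * G)ᵀ * M * (G * A * G) := by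
        simp only [transpose_mul, Matrix.mul_assoc]
    _ = Gᵀ * M * G := by rw [hGAG]

end Matrix

theorem matrixeqn_solution_ambiguity_general {n : ℕ} {F : Type*} [Field F]
    (A B X X₀ G : Matrix (Fin n) (Fin n) F)
    (h1 : A * G * A = A) (h2 : G * A * G = G)
    (hX : A.transpose * X - X.transpose * A = B)
    (hX₀ : A.transpose * X₀ - X₀.transpose * A = B) :
    ∃ Y S : Matrix (Fin n) (Fin n) F,
      X - X₀ = (1 - (A * G).transpose) * Y + S * A ∧
      S.transpose = S ∧ S = (A * G).transpose * S * (A * G) := by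
  have hD : (A.transpose * (X - X₀)).IsSymm :=
    Matrix.isSymm_transpose_mul_sub (hX.trans hX₀.symm)
  refine ⟨X - X₀, G.transpose * (A.transpose * (X - X₀)) * G, ?_, (hD.transpose_mul_mul G).eq,
    (Matrix.transpose_mul_mul_mul_eq_of_mul_mul_eq h2 _).symm⟩
  rw [Matrix.transpose_mul_mul_mul_eq_of_isSymm h1 hD, sub_mul, one_mul, sub_add_cancel]

/-- Any two solutions of `Aᵀ X - Xᵀ A = B` differ by `(1 - P₂ᵀ) Y + S A` for some
`Y` and some symmetric `S` with `S = P₂ᵀ S P₂`, where `P₂ = A*G` for a generalized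
inverse `G` of `A`. -/
theorem matrixeqn_solution_ambiguity {n : ℕ} {F : Type*} [Field F]
    (hchar : (2 : F) ≠ 0)
    (A B X X₀ G : Matrix (Fin n) (Fin n) F)
    (h1 : A * G * A = A) (h2 : G * A * G = G)
    (hX : A.transpose * X - X.transpose * A = B)
    (hX₀ : A.transpose * X₀ - X₀.transpose * A = B) :
    ∃ Y S : Matrix (Fin n) (Fin n) F,
      X - X₀ = (1 - (A * G).transpose) * Y + S * A ∧
      S.transpose = S ∧ S = (A * G).transpose * S * (A * G) :=
  matrixeqn_solution_ambiguity_general A B X X₀ G h1 h2 hX hX₀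
end

section
/- For the Lie algebra gl_n in the Cartan-Weyl basis, let L = p·H + Σ_α f^α E_α with f^α ≠ 0 for all roots α, and suppose Λ (the restriction of ad(L) to the root-space block, Λ^α_β = α·p δ^α_β + c^α_{α-β,β} f^{α-β}) is invertible. Then uᵀ Λ⁻¹ v = 0, where u_{α,k} = -f^{-α} α_k and v_{α,k} = -α_k f^α. Equivalently, for all indices i, j: Σ_{α,β} α_i f^{-α} (Λ⁻¹)^α_β f^β β_j = 0. -/
/-- The roots of `gl_n`: ordered pairs `(i, j)` with `i ≠ j`, corresponding to
`α = e_i - e_j`. -/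
def CMRoot (n : ℕ) : Type := {q : Fin n × Fin n // q.1 ≠ q.2}

instance (n : ℕ) : Fintype (CMRoot n) := by unfold CMRoot; infer_instance
instance (n : ℕ) : DecidableEq (CMRoot n) := by unfold CMRoot; infer_instance

/-- The component `α_i` of the root `α = e_r - e_s`, i.e. `δ_{ri} - δ_{si}`. -/
def rootVec {n : ℕ} (F : Type*) [Field F] (α : CMRoot n) (i : Fin n) : F :=
  (if α.1.1 = i then (1 : F) else 0) - (if α.1.2 = i then (1 : F) else 0)

/-- The root-space block `Λ^{(ij)}_{(rs)} = (p_i - p_j) δ^i_r δ^j_s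
+ f^{(ir)} δ^j_s - f^{(sj)} δ^i_r` of `ad(L)` for `gl_n`. -/
def cmLambda {n : ℕ} (F : Type*) [Field F] (p : Fin n → F) (f : Fin n → Fin n → F) :
    Matrix (CMRoot n) (CMRoot n) F :=
  fun α β =>
    (if α = β then p α.1.1 - p α.1.2 else 0) +
      (if α.1.2 = β.1.2 ∧ α.1.1 ≠ β.1.1 then f α.1.1 β.1.1 else 0) -
      (if α.1.1 = β.1.1 ∧ α.1.2 ≠ β.1.2 then f β.1.2 α.1.2 else 0)

open Polynomial Module Matrix

noncomputable section CMProof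

universe u

section Abstract
variable {F : Type u} {V : Type u} [Field F] [AddCommGroup V] [Module F V] [FiniteDimensional F V]

lemma commutant_big (φ : V →ₗ[F] V) :
    ∃ Ψ : V →ₗ[F] (V →ₗ[F] V), Function.Injective Ψ ∧ ∀ v, φ ∘ₗ Ψ v = Ψ v ∘ₗ φ := by
  classical
  have hT : Module.IsTorsion F[X] (Module.AEval' φ) := by
    intro w
    refine ⟨⟨φ.charpoly, mem_nonZeroDivisors_of_ne_zero φ.charpoly_monic.ne_zero⟩, ?_⟩
    show (φ.charpoly : F[X]) • w = 0
    have : w = Module.AEval'.of φ ((Module.AEval'.of φ).symm w) := by simp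
    rw [this, ← Module.AEval.of_aeval_smul]
    simp [LinearMap.aeval_self_charpoly]
  haveI : Module.Finite F[X] (Module.AEval' φ) := inferInstance
  obtain ⟨ι, hι, q, hq, e, ⟨E0⟩⟩ := Module.equiv_directSum_of_isTorsion.{u, u} hT
  haveI := hι
  set Q : ι → Type u := fun i => F[X] ⧸ (Submodule.span F[X] ({q i ^ e i} : Set F[X])) with hQ
  let E : Module.AEval' φ ≃ₗ[F[X]] (∀ i, Q i) :=
    E0.trans (DirectSum.linearEquivFunOnFintype F[X] ι _)
  -- multiplication map
  have hsmulmul : ∀ (c : F[X]) (s y : ∀ i, Q i), s * (c • y) = c • (s * y) := by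
    intro c s y
    funext i
    show s i * (c • y i) = c • (s i * y i)
    have h1 : ∀ z : Q i, c • z = (Ideal.Quotient.mk _ c) * z := fun z => rfl
    rw [h1, h1]; ring
  let mulMap : (∀ i, Q i) → ((Module.AEval' φ) →ₗ[F[X]] (Module.AEval' φ)) := fun s =>
    E.symm.toLinearMap ∘ₗ
      ({ toFun := fun y => s * y
         map_add' := fun a b => mul_add s a b
         map_smul' := fun c y => (hsmulmul c s y) } : (∀ i, Q i) →ₗ[F[X]] (∀ i, Q i)) ∘ₗ
      E.toLinearMap
  let Ψ0 : V → (V →ₗ[F] V) := fun v =>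
    (Module.AEval'.of φ).symm.toLinearMap ∘ₗ
      ((mulMap (E (Module.AEval'.of φ v))).restrictScalars F) ∘ₗ
      (Module.AEval'.of φ).toLinearMap
  have hΨ0 : ∀ v u, Ψ0 v u =
      (Module.AEval'.of φ).symm (E.symm (E (Module.AEval'.of φ v) * E (Module.AEval'.of φ u))) := by
    intro v u; rfl
  refine ⟨{ toFun := Ψ0, map_add' := ?_, map_smul' := ?_ }, ?_, ?_⟩
  · intro a b; ext u; simp [hΨ0, _root_.map_add, add_mul]
  · intro c a; ext u
    simp only [hΨ0, RingHom.id_apply, LinearMap.smul_apply]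
    have hC : ∀ w : Module.AEval' φ, (C c : F[X]) • w = c • w := fun w => Module.AEval.C_smul φ c w
    have hmul : ∀ s y : ∀ i, Q i, ((C c : F[X]) • s) * y = (C c : F[X]) • (s * y) := by
      intro s y
      rw [mul_comm, hsmulmul, mul_comm]
    rw [_root_.map_smul (Module.AEval'.of φ) c a, ← hC, _root_.map_smul E, hmul, _root_.map_smul E.symm, hC, _root_.map_smul]
  · -- injectivity
    intro a b hab
    have := congrArg (fun (T : V →ₗ[F] V) => T ((Module.AEval'.of φ).symm (E.symm 1))) hab
    simpa [hΨ0, mul_one] using this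
  · intro v
    ext u
    show φ (Ψ0 v u) = Ψ0 v (φ u)
    have h1 : Module.AEval'.of φ (φ u) = (X : F[X]) • Module.AEval'.of φ u :=
      (Module.AEval'.X_smul_of φ u).symm
    have h2 : ∀ w : Module.AEval' φ, (Module.AEval'.of φ).symm ((X : F[X]) • w)
        = φ ((Module.AEval'.of φ).symm w) := fun w => Module.AEval.of_symm_X_smul φ w
    rw [hΨ0, hΨ0, h1, _root_.map_smul, hsmulmul, _root_.map_smul E.symm, h2]
end Abstract

section MatrixLayer
variable {F : Type u} [Field F] {n : ℕ}

def matCommutant (L : Matrix (Fin n) (Fin n) F) : Submodule F (Matrix (Fin n) (Fin n) F) where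
  carrier := {X | L * X = X * L}
  add_mem' := fun {a b} ha hb => by
    simp only [Set.mem_setOf_eq] at *
    rw [Matrix.mul_add, Matrix.add_mul, ha, hb]
  zero_mem' := by simp
  smul_mem' := fun c X hX => by
    simp only [Set.mem_setOf_eq] at *
    rw [Matrix.mul_smul, Matrix.smul_mul, hX]

lemma le_finrank_matCommutant (L : Matrix (Fin n) (Fin n) F) :
    n ≤ Module.finrank F (matCommutant L) := by
  obtain ⟨Ψ, hinj, hcomm⟩ := commutant_big (Matrix.toLin' L)
  let T : ((Fin n → F) →ₗ[F] (Fin n → F)) ≃ₗ[F] Matrix (Fin n) (Fin n) F := LinearMap.toMatrix'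
  have hmem : ∀ v, T (Ψ v) ∈ matCommutant L := by
    intro v
    show L * T (Ψ v) = T (Ψ v) * L
    have := congrArg (fun g => LinearMap.toMatrix' g) (hcomm v)
    simpa [LinearMap.toMatrix'_comp, LinearMap.toMatrix'_toLin'] using this
  let Ψ' : (Fin n → F) →ₗ[F] (matCommutant L) := (T.toLinearMap ∘ₗ Ψ).codRestrict _ hmem
  have hinj' : Function.Injective Ψ' := by
    intro a b hab
    apply hinj
    apply T.injective
    exact congrArg Subtype.val hab
  calc n = Module.finrank F (Fin n → F) := (Module.finrank_fin_fun F).symm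
    _ ≤ _ := LinearMap.finrank_le_finrank_of_injective hinj'

/-- diagonal map on the commutant -/
def diagMap (L : Matrix (Fin n) (Fin n) F) : matCommutant L →ₗ[F] (Fin n → F) :=
  (Matrix.diagLinearMap (Fin n) F F) ∘ₗ (matCommutant L).subtype

lemma diag_surjective (L : Matrix (Fin n) (Fin n) F)
    (hinj : Function.Injective (diagMap L)) : Function.Surjective (diagMap L) := by
  have h1 : Module.finrank F (matCommutant L) ≤ n := by
    have := LinearMap.finrank_le_finrank_of_injective hinj
    simpa [Module.finrank_fin_fun] using this
  have h2 := le_finrank_matCommutant L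
  have heq : Module.finrank F (matCommutant L) = Module.finrank F (Fin n → F) := by
    rw [Module.finrank_fin_fun]; omega
  exact (LinearMap.injective_iff_surjective_of_finrank_eq_finrank heq).mp hinj

lemma sum_CMRoot (G : CMRoot n → F) :
    ∑ β : CMRoot n, G β
      = ∑ q : Fin n × Fin n, (if h : q.1 ≠ q.2 then G ⟨q, h⟩ else 0) := by
  classical
  rw [← Fintype.sum_subtype_add_sum_subtype (fun q : Fin n × Fin n => q.1 ≠ q.2)
    (fun q => if h : q.1 ≠ q.2 then G ⟨q, h⟩ else 0)]
  have h2 : ∑ x : {q : Fin n × Fin n // ¬ q.1 ≠ q.2},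
      (if h : (x : Fin n × Fin n).1 ≠ (x : Fin n × Fin n).2 then G ⟨x, h⟩ else 0) = 0 := by
    apply Finset.sum_eq_zero
    intro x _
    rw [dif_neg x.2]
  rw [h2, add_zero]
  apply Finset.sum_congr rfl
  intro x _
  rw [dif_pos x.2]
  rfl

section Bridge
variable (p : Fin n → F) (f : Fin n → Fin n → F)

def cmL (p : Fin n → F) (f : Fin n → Fin n → F) : Matrix (Fin n) (Fin n) F :=
  Matrix.of fun i j => if i = j then p i else f i j

def cmV (f : Fin n → Fin n → F) : Matrix (CMRoot n) (Fin n) F :=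
  Matrix.of fun (α : CMRoot n) (k : Fin n) => -(rootVec F α k) * f α.1.1 α.1.2

def cmU (f : Fin n → Fin n → F) : Matrix (CMRoot n) (Fin n) F :=
  Matrix.of fun (α : CMRoot n) (k : Fin n) => -(rootVec F α k) * f α.1.2 α.1.1

lemma cmV_mk (f : Fin n → Fin n → F) {r s : Fin n} (h : r ≠ s) (k : Fin n) :
    cmV f ⟨(r, s), h⟩ k = -(rootVec F ⟨(r, s), h⟩ k) * f r s := rfl

lemma cmU_mk (f : Fin n → Fin n → F) {r s : Fin n} (h : r ≠ s) (k : Fin n) :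
    cmU f ⟨(r, s), h⟩ k = -(rootVec F ⟨(r, s), h⟩ k) * f s r := rfl

lemma subtype_eq_iff {r s i j : Fin n} (hrs : r ≠ s) (hij : i ≠ j) :
    ((⟨(r,s),hrs⟩ : CMRoot n) = ⟨(i,j),hij⟩) ↔ (r = i ∧ s = j) := by
  constructor
  · intro h
    have := congrArg (fun z : CMRoot n => z.1) h
    simpa [Prod.ext_iff] using this
  · rintro ⟨h1, h2⟩; subst h1; subst h2; rfl

lemma cmLambda_mk {r s i j : Fin n} (h1 : r ≠ s) (h2 : i ≠ j) :
    cmLambda F p f ⟨(r, s), h1⟩ ⟨(i, j), h2⟩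
      = (if r = i ∧ s = j then p r - p s else 0) +
        (if s = j ∧ r ≠ i then f r i else 0) -
        (if r = i ∧ s ≠ j then f j s else 0) := by
  show (if (⟨(r, s), h1⟩ : CMRoot n) = ⟨(i, j), h2⟩ then p r - p s else 0) +
        (if s = j ∧ r ≠ i then f r i else 0) -
        (if r = i ∧ s ≠ j then f j s else 0) = _
  rw [if_congr (subtype_eq_iff h1 h2) rfl rfl]

lemma bridge_offdiag (X : Matrix (Fin n) (Fin n) F) (α : CMRoot n) :
    (cmL p f * X - X * cmL p f) α.1.1 α.1.2
      = ((cmLambda F p f) *ᵥ (fun β : CMRoot n => X β.1.1 β.1.2)) α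
        + ((cmV f) *ᵥ (fun k => X k k)) α := by
  classical
  obtain ⟨⟨r, s⟩, hrs⟩ := α
  simp only [Matrix.sub_apply, Matrix.mul_apply, Matrix.mulVec, dotProduct]
  rw [sum_CMRoot (fun β : CMRoot n => cmLambda F p f ⟨(r,s),hrs⟩ β * X β.1.1 β.1.2),
    Fintype.sum_prod_type]
  have hrs' : r ≠ s := hrs
  have key : ∀ i j : Fin n,
      (if j = s then (cmL p f r i) * X i j else 0) - (if i = r then X i j * (cmL p f j s) else 0)
      = (if h : i ≠ j then cmLambda F p f ⟨(r,s),hrs⟩ ⟨(i,j),h⟩ * X i j else 0)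
        + (if i = j then -(rootVec F ⟨(r,s),hrs⟩ i) * f r s * X i j else 0) := by
    intro i j
    by_cases hij : i = j
    · subst hij
      simp only [dif_neg (not_not_intro rfl), if_pos rfl, rootVec, cmL, Matrix.of_apply,
        zero_add]
      split_ifs <;> (try subst_vars) <;> first | ring1 | (exact absurd rfl hrs') | simp_all | (simp_all; ring1)
    · rw [dif_pos hij, if_neg hij, add_zero]
      simp only [cmLambda_mk, cmL, Matrix.of_apply]
      split_ifs <;> (try subst_vars) <;> first | ring1 | (exact absurd rfl hrs') | simp_all | (simp_all; ring1)
  have hA : ∑ i, ∑ j, (if j = s then cmL p f r i * X i j else 0) = ∑ m, cmL p f r m * X m s := by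
    apply Finset.sum_congr rfl
    intro i _
    rw [Finset.sum_ite_eq' Finset.univ s (fun j => cmL p f r i * X i j)]
    simp
  have hB : ∑ i, ∑ j, (if i = r then X i j * cmL p f j s else 0) = ∑ m, X r m * cmL p f m s := by
    have h1 : ∀ i, ∑ j, (if i = r then X i j * cmL p f j s else 0)
        = if i = r then ∑ j, X i j * cmL p f j s else 0 := by
      intro i; split_ifs <;> simp
    rw [Finset.sum_congr rfl (fun i _ => h1 i), Finset.sum_ite_eq' Finset.univ r
      (fun i => ∑ j, X i j * cmL p f j s)]
    simp
  calc (∑ m, cmL p f r m * X m s) - ∑ m, X r m * cmL p f m s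
      = (∑ i, ∑ j, (if j = s then cmL p f r i * X i j else 0))
        - ∑ i, ∑ j, (if i = r then X i j * cmL p f j s else 0) := by rw [hA, hB]
    _ = ∑ i, ∑ j, ((if j = s then cmL p f r i * X i j else 0)
        - (if i = r then X i j * cmL p f j s else 0)) := by
        rw [← Finset.sum_sub_distrib]
        exact Finset.sum_congr rfl fun i _ => (Finset.sum_sub_distrib _ _).symm
    _ = ∑ i, ∑ j, ((if h : (i,j).1 ≠ (i,j).2 then cmLambda F p f ⟨(r,s),hrs⟩ ⟨(i,j),h⟩ * X i j else 0)
          + (if i = j then -(rootVec F ⟨(r,s),hrs⟩ i) * f r s * X i j else 0)) :=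
        Finset.sum_congr rfl fun i _ => Finset.sum_congr rfl fun j _ => key i j
    _ = (∑ i, ∑ j, (if h : (i,j).1 ≠ (i,j).2 then cmLambda F p f ⟨(r,s),hrs⟩ ⟨(i,j),h⟩ * X i j else 0))
          + ∑ i, ∑ j, (if i = j then -(rootVec F ⟨(r,s),hrs⟩ i) * f r s * X i j else 0) := by
        rw [← Finset.sum_add_distrib]
        exact Finset.sum_congr rfl fun i _ => Finset.sum_add_distrib
    _ = _ := by
        congr 1
        apply Finset.sum_congr rfl
        intro k _
        rw [Finset.sum_ite_eq Finset.univ k (fun j => -(rootVec F ⟨(r,s),hrs⟩ k) * f r s * X k j)]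
        simp [cmV_mk]

lemma bridge_diag (X : Matrix (Fin n) (Fin n) F) (k : Fin n) :
    (cmL p f * X - X * cmL p f) k k
      = (((cmU f)ᵀ) *ᵥ (fun β : CMRoot n => X β.1.1 β.1.2)) k := by
  classical
  simp only [Matrix.sub_apply, Matrix.mul_apply, Matrix.mulVec, dotProduct,
    Matrix.transpose_apply]
  rw [sum_CMRoot (fun β : CMRoot n => cmU f β k * X β.1.1 β.1.2), Fintype.sum_prod_type]
  have key : ∀ i j : Fin n,
      (if j = k then cmL p f k i * X i j else 0) - (if i = k then X i j * cmL p f j k else 0)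
      = if h : (i,j).1 ≠ (i,j).2 then cmU f ⟨(i,j),h⟩ k * X i j else 0 := by
    intro i j
    by_cases hij : i = j
    · subst hij
      rw [dif_neg (not_not_intro rfl)]
      simp only [cmL, Matrix.of_apply]
      split_ifs <;> (try subst_vars) <;> first | ring1 | simp_all | (simp_all; ring1)
    · rw [dif_pos hij]
      simp only [cmU_mk, rootVec, cmL, Matrix.of_apply]
      split_ifs <;> (try subst_vars) <;> first | ring1 | simp_all | (simp_all; ring1)
  have hA : ∑ i, ∑ j, (if j = k then cmL p f k i * X i j else 0) = ∑ m, cmL p f k m * X m k := by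
    apply Finset.sum_congr rfl
    intro i _
    rw [Finset.sum_ite_eq' Finset.univ k (fun j => cmL p f k i * X i j)]
    simp
  have hB : ∑ i, ∑ j, (if i = k then X i j * cmL p f j k else 0) = ∑ m, X k m * cmL p f m k := by
    have h1 : ∀ i, ∑ j, (if i = k then X i j * cmL p f j k else 0)
        = if i = k then ∑ j, X i j * cmL p f j k else 0 := by
      intro i; split_ifs <;> simp
    rw [Finset.sum_congr rfl (fun i _ => h1 i), Finset.sum_ite_eq' Finset.univ k
      (fun i => ∑ j, X i j * cmL p f j k)]
    simp
  calc (∑ m, cmL p f k m * X m k) - ∑ m, X k m * cmL p f m k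
      = (∑ i, ∑ j, (if j = k then cmL p f k i * X i j else 0))
        - ∑ i, ∑ j, (if i = k then X i j * cmL p f j k else 0) := by rw [hA, hB]
    _ = ∑ i, ∑ j, ((if j = k then cmL p f k i * X i j else 0)
        - (if i = k then X i j * cmL p f j k else 0)) := by
        rw [← Finset.sum_sub_distrib]
        exact Finset.sum_congr rfl fun i _ => (Finset.sum_sub_distrib _ _).symm
    _ = _ := Finset.sum_congr rfl fun i _ => Finset.sum_congr rfl fun j _ => key i j

end Bridge
end MatrixLayer
end CMProof

/-- For `gl_n` with arbitrary nonzero scalars `f^{(ij)}` attached to the roots,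
provided `Λ` is invertible one has `uᵀ Λ⁻¹ v = 0`, where
`u_{(rs),k} = -(δ_{rk} - δ_{sk}) f^{(sr)}` and `v_{(rs),k} = -(δ_{rk} - δ_{sk}) f^{(rs)}`;
equivalently `Σ_{α,β} α_i f^{-α} (Λ⁻¹)^α_β f^β β_j = 0` for all `i, j`. -/
theorem gln_uT_LambdaInv_v_eq_zero {n : ℕ} {F : Type*} [Field F]
    (p : Fin n → F) (f : Fin n → Fin n → F)
    (hf : ∀ i j : Fin n, i ≠ j → f i j ≠ 0)
    (hΛ : IsUnit (cmLambda F p f)) :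
    (Matrix.of fun (α : CMRoot n) (k : Fin n) =>
        -(rootVec F α k) * f α.1.2 α.1.1).transpose *
      (cmLambda F p f)⁻¹ *
      (Matrix.of fun (α : CMRoot n) (k : Fin n) =>
        -(rootVec F α k) * f α.1.1 α.1.2) = 0 := by
  classical
  have hdet : IsUnit (cmLambda F p f).det := (Matrix.isUnit_iff_isUnit_det _).mp hΛ
  have hmulVecInj : ∀ g : CMRoot n → F, (cmLambda F p f) *ᵥ g = 0 → g = 0 := by
    intro g hg
    have h1 := congrArg (fun v => (cmLambda F p f)⁻¹ *ᵥ v) hg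
    simpa [Matrix.mulVec_mulVec, Matrix.nonsing_inv_mul _ hdet] using h1
  have hinj : Function.Injective (diagMap (cmL p f)) := by
    rw [injective_iff_map_eq_zero]
    intro X hX
    have hdiag : Matrix.diag X.1 = 0 := hX
    have hcomm0 : cmL p f * X.1 - X.1 * cmL p f = 0 := sub_eq_zero.mpr X.2
    have hg : (cmLambda F p f) *ᵥ (fun β : CMRoot n => X.1 β.1.1 β.1.2) = 0 := by
      funext α
      have hb := bridge_offdiag p f X.1 α
      rw [hcomm0] at hb
      have hx0 : (fun k => X.1 k k) = (0 : Fin n → F) := by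
        funext k; exact congrFun hdiag k
      rw [hx0] at hb
      simp only [Matrix.mulVec_zero, Matrix.zero_apply, Pi.zero_apply, add_zero] at hb
      exact hb.symm
    have hg0 := hmulVecInj _ hg
    apply Subtype.ext
    funext i j
    by_cases hij : i = j
    · subst hij; exact congrFun hdiag i
    · exact congrFun hg0 ⟨(i, j), hij⟩
  have hsurj := diag_surjective (cmL p f) hinj
  show (cmU f)ᵀ * (cmLambda F p f)⁻¹ * (cmV f) = 0
  ext k j
  obtain ⟨Y, hY⟩ := hsurj (Pi.single j 1)
  have hYdiag : Matrix.diag Y.1 = Pi.single j 1 := hY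
  have hcomm0 : cmL p f * Y.1 - Y.1 * cmL p f = 0 := sub_eq_zero.mpr Y.2
  set g : CMRoot n → F := fun β : CMRoot n => Y.1 β.1.1 β.1.2 with hgdef
  have h1 : (cmLambda F p f) *ᵥ g + (cmV f) *ᵥ (fun k => Y.1 k k) = 0 := by
    funext α
    have hb := bridge_offdiag p f Y.1 α
    rw [hcomm0] at hb
    simpa using hb.symm
  have hx1 : (fun k => Y.1 k k) = Pi.single j 1 := by
    funext k; exact congrFun hYdiag k
  rw [hx1] at h1
  have hVcol : (cmV f) *ᵥ (Pi.single j 1) = fun β => cmV f β j := by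
    funext β
    simp [Matrix.mulVec, dotProduct, Pi.single_apply, mul_ite]
  rw [hVcol] at h1
  have h2 : (cmLambda F p f)⁻¹ *ᵥ (fun β => cmV f β j) = -g := by
    have hcol : (fun β => cmV f β j) = -((cmLambda F p f) *ᵥ g) := by
      rw [neg_eq_iff_add_eq_zero.mpr h1]
    rw [hcol, Matrix.mulVec_neg, Matrix.mulVec_mulVec, Matrix.nonsing_inv_mul _ hdet,
      Matrix.one_mulVec]
  have h3 : (cmU f)ᵀ *ᵥ g = 0 := by
    funext k'
    have hb := bridge_diag p f Y.1 k'
    rw [hcomm0] at hb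
    simpa using hb.symm
  have hentry : ((cmU f)ᵀ * (cmLambda F p f)⁻¹ * (cmV f)) k j
      = ((cmU f)ᵀ *ᵥ ((cmLambda F p f)⁻¹ *ᵥ (fun β => cmV f β j))) k := by
    rw [Matrix.mulVec_mulVec]
    simp [Matrix.mul_apply, Matrix.mulVec, dotProduct]
  rw [hentry, h2, Matrix.mulVec_neg, h3]
  simp
end
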